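/- The complete bipartite graph K_{2,3} (with parts of sizes 2 and 3) is not an underlying push clique. -/

import Mathlib

/-- A directed graph `A` on `V` is an oriented graph: irreflexive and asymmetric. -/
def IsOriented {V : Type*} (A : V → V → Prop) : Prop :=
  (∀ v, ¬ A v v) ∧ ∀ u v, A u v → ¬ A v u

/-- `u` and `v` are adjacent in `A`. -/
def Adj {V : Type*} (A : V → V → Prop) (u v : V) : Prop :=
  A u v ∨ A v u

/-- The push of `A` by the vertex set `S`: arcs with exactly one endpoint in `S`
are reversed. -/
def push {V : Type*} (S : Set V) (A : V → V → Prop) (u v : V) : Prop :=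
  (Xor' (u ∈ S) (v ∈ S) ∧ A v u) ∨ (¬ Xor' (u ∈ S) (v ∈ S) ∧ A u v)

/-- `u` and `v` agree on `w`. -/
def AgreeOn {V : Type*} (A : V → V → Prop) (u v w : V) : Prop :=
  (A w u ∧ A w v) ∨ (A u w ∧ A v w)

/-- `u` and `v` disagree on `w`. -/
def DisagreeOn {V : Type*} (A : V → V → Prop) (u v w : V) : Prop :=
  (A u w ∧ A w v) ∨ (A w u ∧ A v w)

/-- `u` and `v` are joined by a directed 2-path in `A`. -/
def TwoPath {V : Type*} (A : V → V → Prop) (u v : V) : Prop :=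
  ∃ w, (A u w ∧ A w v) ∨ (A v w ∧ A w u)

/-- `A` is an oriented clique: any two distinct vertices are adjacent or joined
by a directed 2-path. -/
def IsOrientedClique {V : Type*} (A : V → V → Prop) : Prop :=
  ∀ u v, u ≠ v → Adj A u v ∨ TwoPath A u v

/-- `A` is a push clique: every push of `A` is an oriented clique. -/
def IsPushClique {V : Type*} (A : V → V → Prop) : Prop :=
  ∀ S : Set V, IsOrientedClique (push S A)

/-- `A` is an orientation of the simple graph `G`. -/
def IsOrientationOf {V : Type*} (A : V → V → Prop) (G : SimpleGraph V) : Prop :=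
  IsOriented A ∧ ∀ u v, Adj A u v ↔ G.Adj u v

/-- `G` is an underlying push clique. -/
def IsUnderlyingPushClique {V : Type*} (G : SimpleGraph V) : Prop :=
  ∃ A : V → V → Prop, IsOrientationOf A G ∧ IsPushClique A

/-- `G` is an underlying oriented clique. -/
def IsUnderlyingOrientedClique {V : Type*} (G : SimpleGraph V) : Prop :=
  ∃ A : V → V → Prop, IsOrientationOf A G ∧ IsOrientedClique A

/- In a push clique, two distinct non-adjacent vertices `u, v` are joined by a
directed 2-path, so they *disagree* on some common neighbour; pushing `{u}` and doing the same
shows that they also *agree* on some common neighbour. In `K_{2,3}` the three vertices of the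
larger part are pairwise non-adjacent with common neighbours `a₀, a₁`. Record for each of them
whether `a₀` and `a₁` point to it in the same way; two vertices that agree on one of `a₀, a₁` and
disagree on the other get different answers, and three vertices cannot pairwise differ in a
yes/no answer. -/

section PushClique

variable {V : Type*} {A : V → V → Prop} {u v : V}

lemma push_iff_of_mem_iff {S : Set V} (h : u ∈ S ↔ v ∈ S) : push S A u v ↔ A u v := by
  have hxor : ¬ Xor (u ∈ S) (v ∈ S) := by unfold Xor; tauto
  exact ⟨fun hp => hp.elim (fun hp => absurd hp.1 hxor) And.right, fun h => .inr ⟨hxor, h⟩⟩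

lemma push_iff_of_not_mem_iff {S : Set V} (h : ¬ (u ∈ S ↔ v ∈ S)) :
    push S A u v ↔ A v u := by
  have hxor : Xor (u ∈ S) (v ∈ S) := by unfold Xor; tauto
  exact ⟨fun hp => hp.elim And.right (fun hp => absurd hxor hp.1), fun h => .inl ⟨hxor, h⟩⟩

lemma push_empty : push ∅ A = A := by
  ext u v
  exact push_iff_of_mem_iff (by simp)

lemma adj_push (S : Set V) : Adj (push S A) u v ↔ Adj A u v := by
  unfold Adj
  by_cases h : u ∈ S ↔ v ∈ S
  · rw [push_iff_of_mem_iff h, push_iff_of_mem_iff h.symm]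
  · rw [push_iff_of_not_mem_iff h, push_iff_of_not_mem_iff (mt Iff.symm h), or_comm]

lemma twoPath_iff_exists_disagreeOn : TwoPath A u v ↔ ∃ w, DisagreeOn A u v w := by
  unfold TwoPath DisagreeOn
  simp only [and_comm]

/-- Pushing `{u}` reverses the arcs at `u`, so a 2-path from `u` to `v` in the push becomes a
vertex on which `u` and `v` agree. -/
lemma exists_agreeOn_of_twoPath_push (huv : u ≠ v) (h : ¬ Adj A u v)
    (hpath : TwoPath (push {u} A) u v) : ∃ w, AgreeOn A u v w := by
  obtain ⟨w, hw⟩ := hpath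
  refine ⟨w, ?_⟩
  have hu : u ∈ ({u} : Set V) := rfl
  have hv : v ∉ ({u} : Set V) := huv.symm
  have hpush_uv : push {u} A u v ↔ A v u := push_iff_of_not_mem_iff (by tauto)
  have hpush_vu : push {u} A v u ↔ A u v := push_iff_of_not_mem_iff (by tauto)
  unfold Adj at h
  by_cases hwu : w = u
  · subst hwu
    tauto
  by_cases hwv : w = v
  · subst hwv
    tauto
  have hw' : w ∉ ({u} : Set V) := hwu
  rw [push_iff_of_not_mem_iff (A := A) (by tauto : ¬ (u ∈ ({u} : Set V) ↔ w ∈ _)),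
    push_iff_of_mem_iff (A := A) (by tauto : w ∈ ({u} : Set V) ↔ v ∈ _),
    push_iff_of_mem_iff (A := A) (by tauto : v ∈ ({u} : Set V) ↔ w ∈ _),
    push_iff_of_not_mem_iff (A := A) (by tauto : ¬ (w ∈ ({u} : Set V) ↔ u ∈ _))] at hw
  unfold AgreeOn
  tauto

lemma IsOrientedClique.twoPath_of_not_adj (hA : IsOrientedClique A) (huv : u ≠ v)
    (h : ¬ Adj A u v) : TwoPath A u v :=
  (hA u v huv).resolve_left h

lemma IsPushClique.exists_disagreeOn (hA : IsPushClique A) (huv : u ≠ v) (h : ¬ Adj A u v) :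
    ∃ w, DisagreeOn A u v w := by
  have hclique : IsOrientedClique A := push_empty (A := A) ▸ hA ∅
  exact twoPath_iff_exists_disagreeOn.mp (hclique.twoPath_of_not_adj huv h)

lemma IsPushClique.exists_agreeOn (hA : IsPushClique A) (huv : u ≠ v) (h : ¬ Adj A u v) :
    ∃ w, AgreeOn A u v w :=
  exists_agreeOn_of_twoPath_push huv h <|
    (hA {u}).twoPath_of_not_adj huv ((adj_push {u}).not.mpr h)

end PushClique

section CompleteBipartite

variable {α β : Type*} {A : α ⊕ β → α ⊕ β → Prop}

lemma IsOrientationOf.not_inr_inr (hA : IsOrientationOf A (completeBipartiteGraph α β))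
    (j k : β) : ¬ A (.inr j) (.inr k) := fun h => by
  simpa using (hA.2 _ _).mp (Or.inl h)

lemma IsOrientationOf.not_adj_inr_inr (hA : IsOrientationOf A (completeBipartiteGraph α β))
    (j k : β) : ¬ Adj A (.inr j) (.inr k) := by
  simp only [Adj, hA.not_inr_inr, or_self, not_false_eq_true]

lemma IsOrientationOf.inr_inl_iff (hA : IsOrientationOf A (completeBipartiteGraph α β))
    (m : α) (k : β) : A (.inr k) (.inl m) ↔ ¬ A (.inl m) (.inr k) :=
  ⟨fun h h' => hA.1.2 _ _ h' h,
    fun h => ((hA.2 _ _).mpr (by simp)).resolve_left h⟩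

lemma IsOrientationOf.exists_inl_iff_of_agreeOn
    (hA : IsOrientationOf A (completeBipartiteGraph α β)) {j k : β} {w : α ⊕ β}
    (hw : AgreeOn A (.inr j) (.inr k) w) :
    ∃ m, (A (.inl m) (.inr j) ↔ A (.inl m) (.inr k)) := by
  rcases w with m | l
  · simp only [AgreeOn, hA.inr_inl_iff] at hw
    exact ⟨m, by tauto⟩
  · simp only [AgreeOn, hA.not_inr_inr, false_and, or_self] at hw

lemma IsOrientationOf.exists_not_inl_iff_of_disagreeOn
    (hA : IsOrientationOf A (completeBipartiteGraph α β)) {j k : β} {w : α ⊕ β}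
    (hw : DisagreeOn A (.inr j) (.inr k) w) :
    ∃ m, ¬ (A (.inl m) (.inr j) ↔ A (.inl m) (.inr k)) := by
  rcases w with m | l
  · simp only [DisagreeOn, hA.inr_inl_iff] at hw
    exact ⟨m, by tauto⟩
  · simp only [DisagreeOn, hA.not_inr_inr, and_false, or_self] at hw

end CompleteBipartite

/-- The parity `s 0 ↔ s 1` separates any two points at Hamming distance one in `{0,1}²`,
which thus contains no three such points pairwise. -/
lemma not_forall_agree_and_disagree (s : Fin 3 → Fin 2 → Prop) :
    ¬ ∀ i j, i ≠ j → (∃ m, s i m ↔ s j m) ∧ ∃ m, ¬ (s i m ↔ s j m) := by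
  intro h
  have parity_ne : ∀ i j, i ≠ j → ¬ ((s i 0 ↔ s i 1) ↔ (s j 0 ↔ s j 1)) := by
    intro i j hij
    obtain ⟨hagree, hdisagree⟩ := h i j hij
    rw [Fin.exists_fin_two] at hagree hdisagree
    tauto
  have := parity_ne 0 1 (by decide)
  have := parity_ne 0 2 (by decide)
  have := parity_ne 1 2 (by decide)
  tauto

theorem stmt_11 :
    ¬ IsUnderlyingPushClique (completeBipartiteGraph (Fin 2) (Fin 3)) := by
  rintro ⟨A, hA, hpush⟩
  refine not_forall_agree_and_disagree (fun k m => A (.inl m) (.inr k)) fun j k hjk => ?_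
  have hne : (Sum.inr j : Fin 2 ⊕ Fin 3) ≠ .inr k := by simpa using hjk
  have hnadj := hA.not_adj_inr_inr j k
  obtain ⟨w, hagree⟩ := hpush.exists_agreeOn hne hnadj
  obtain ⟨w', hdisagree⟩ := hpush.exists_disagreeOn hne hnadj
  exact ⟨hA.exists_inl_iff_of_agreeOn hagree, hA.exists_not_inl_iff_of_disagreeOn hdisagree⟩
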